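/- arXiv:1706.05558 — 4 statements merged into one kernel-verified Lean document; each statement's English description precedes it below -/
import Mathlib

section
/- Let A and B be countably infinite structures in possibly different languages. Suppose A is a semi-retraction of B and that B-indexed indiscernible sets have the modeling property. Then A-indexed indiscernible sets have the modeling property. -/
open FirstOrder FirstOrder.Language FirstOrder.Language.Structure CategoryTheory

namespace SRPaper

/-- Two tuples from `M` have the same complete quantifier-free type:
they satisfy the same quantifier-free formulas. -/
def SameQfTp (L : Language) (M : Type*) [L.Structure M] {n : ℕ} (a b : Fin n → M) : Prop :=
  ∀ φ : L.Formula (Fin n), φ.IsQF → (φ.Realize a ↔ φ.Realize b)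

/-- A map is quantifier-free-type-preserving if tuples with the same complete
quantifier-free type are sent to tuples with the same complete quantifier-free type. -/
def QfTpPreserving (LA : Language) (A : Type*) [LA.Structure A]
    (LB : Language) (B : Type*) [LB.Structure B] (h : A → B) : Prop :=
  ∀ (n : ℕ) (a b : Fin n → A), SameQfTp LA A a b → SameQfTp LB B (h ∘ a) (h ∘ b)

/-- `g : A → B` and `f : B → A` witness that `A` is a semi-retraction of `B`. -/
def SemiRetractionWitness (LA : Language) (A : Type*) [LA.Structure A]
    (LB : Language) (B : Type*) [LB.Structure B] (g : A → B) (f : B → A) : Prop :=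
  Function.Injective g ∧ Function.Injective f ∧
    QfTpPreserving LA A LB B g ∧ QfTpPreserving LB B LA A f ∧
    ∀ (n : ℕ) (φ : LA.Formula (Fin n)), φ.IsQF →
      ∀ s : Fin n → A, φ.Realize s → φ.Realize (f ∘ g ∘ s)

/-- `A` is a semi-retraction of `B`. -/
def IsSemiRetractionOf (LA : Language) (A : Type*) [LA.Structure A]
    (LB : Language) (B : Type*) [LB.Structure B] : Prop :=
  ∃ (g : A → B) (f : B → A), SemiRetractionWitness LA A LB B g f

/-- The Ramsey property for a class of structures `K`: for all `A B ∈ K` and `k ≥ 1` there is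
`C ∈ K` such that every `k`-coloring of substructures of `C` admits a copy `B'` of `B` in `C`
on which the color of copies of `A` is constant. -/
def RamseyClass (L : Language) (K : Set (Bundled L.Structure)) : Prop :=
  ∀ A B : Bundled L.Structure, A ∈ K → B ∈ K → ∀ k : ℕ, 1 ≤ k →
    ∃ C : Bundled L.Structure, C ∈ K ∧
      ∀ c : L.Substructure C → Fin k,
        ∃ B' : L.Substructure C, Nonempty (B ≃[L] B') ∧
          ∀ A₁ A₂ : L.Substructure C, A₁ ≤ B' → A₂ ≤ B' →
            Nonempty (A ≃[L] A₁) → Nonempty (A ≃[L] A₂) → c A₁ = c A₂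

/-- A countable structure has the Ramsey property if its age does. -/
def HasRP (L : Language) (M : Type*) [L.Structure M] : Prop :=
  RamseyClass L (L.age M)

/-- `(a i : i ∈ I)` is an `I`-indexed indiscernible set of `d`-tuples in `U`. -/
def IndexedIndiscernible (L' : Language) (I : Type*) [L'.Structure I]
    (L : Language) (U : Type*) [L.Structure U] (d : ℕ) (a : I → Fin d → U) : Prop :=
  ∀ (n : ℕ) (ι κ : Fin n → I), SameQfTp L' I ι κ →
    ∀ φ : L.Formula (Fin n × Fin d),
      (φ.Realize fun p => a (ι p.1) p.2) ↔ (φ.Realize fun p => a (κ p.1) p.2)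

/-- `Y` realizes the EM-type of `X`: any formula satisfied by all `X`-tuples whose index tuple
has a given complete quantifier-free type in `I` is satisfied by the corresponding `Y`-tuple. -/
def LocallyBased (L' : Language) (I : Type*) [L'.Structure I]
    (L : Language) (U : Type*) [L.Structure U] (d : ℕ) (X Y : I → Fin d → U) : Prop :=
  ∀ (n : ℕ) (φ : L.Formula (Fin n × Fin d)) (ι : Fin n → I),
    (∀ κ : Fin n → I, SameQfTp L' I ι κ → φ.Realize fun p => X (κ p.1) p.2) →
    (φ.Realize fun p => Y (ι p.1) p.2)

/-- `U` realizes every finitely-satisfiable set of formulas in one free variable with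
countably many parameters: "sufficient saturation" for countable index structures. -/
def AlephOneSaturated (L : Language) (U : Type*) [L.Structure U] : Prop :=
  ∀ (p : ℕ → U) (Φ : Set (L.Formula (ℕ ⊕ Fin 1))),
    (∀ Φ₀ : Finset (L.Formula (ℕ ⊕ Fin 1)), ↑Φ₀ ⊆ Φ →
      ∃ x : U, ∀ φ ∈ Φ₀, Formula.Realize φ (Sum.elim p fun _ => x)) →
    ∃ x : U, ∀ φ ∈ Φ, Formula.Realize φ (Sum.elim p fun _ => x)

/-- `I`-indexed indiscernible sets have the modeling property: in any sufficiently saturated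
structure `U`, any `I`-indexed set of same-length tuples admits an `I`-indexed indiscernible
set in `U` locally based on it. -/
def ModelingProperty (L' : Language) (I : Type*) [L'.Structure I] : Prop :=
  ∀ (L : FirstOrder.Language.{0, 0}) (U : Type) [L.Structure U], AlephOneSaturated L U →
    ∀ (d : ℕ) (X : I → Fin d → U),
      ∃ Y : I → Fin d → U,
        IndexedIndiscernible L' I L U d Y ∧ LocallyBased L' I L U d X Y

end SRPaper

open SRPaper in
/-- If `A` is a semi-retraction of `B` and `B`-indexed indiscernible sets have
the modeling property, then `A`-indexed indiscernible sets have the modeling property. -/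
theorem statement2 (LA : Language) (A : Type) [LA.Structure A] [Countable A] [Infinite A]
    (LB : Language) (B : Type) [LB.Structure B] [Countable B] [Infinite B]
    (h : IsSemiRetractionOf LA A LB B) (hB : ModelingProperty LB B) :
    ModelingProperty LA A := by
  obtain ⟨g, f, hg, hf, hgq, hfq, hret⟩ := h
  intro L U _ hU d X
  obtain ⟨Y', hY'ind, hY'loc⟩ := hB L U hU d (fun b => X (f b))
  refine ⟨fun a => Y' (g a), ?_, ?_⟩
  · intro n ι κ hικ φ
    exact hY'ind n (g ∘ ι) (g ∘ κ) (hgq n ι κ hικ) φ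
  · intro n φ ι hX
    refine hY'loc n φ (g ∘ ι) ?_
    intro μ hμ
    have h1 : SameQfTp LA A ι (f ∘ g ∘ ι) := by
      intro ψ hψ
      constructor
      · exact hret n ψ hψ ι
      · intro hr
        by_contra hc
        have := hret n ψ.not hψ.not ι (by simpa using hc)
        rw [Formula.realize_not] at this
        exact this hr
    have h2 : SameQfTp LA A ι (f ∘ μ) := fun ψ hψ =>
      (h1 ψ hψ).trans (hfq n (g ∘ ι) μ hμ ψ hψ)
    exact hX (f ∘ μ) h2
end

section
/- Let A and B be countable, locally finite structures each linearly ordered by a binary relation < in its language. If A is a semi-retraction of B and age(B) has the Ramsey property, then age(A) has the Ramsey property. -/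
open FirstOrder FirstOrder.Language FirstOrder.Language.Structure CategoryTheory

namespace SRPaper

open Set Substructure

section SameQfTp

variable {L : Language} {M : Type*} [L.Structure M] {m n : ℕ} {v w : Fin n → M}

theorem SameQfTp.symm (h : SameQfTp L M v w) : SameQfTp L M w v :=
  fun φ hφ => (h φ hφ).symm

theorem SameQfTp.trans {u : Fin n → M} (h₁ : SameQfTp L M u v) (h₂ : SameQfTp L M v w) :
    SameQfTp L M u w :=
  fun φ hφ => (h₁ φ hφ).trans (h₂ φ hφ)

theorem SameQfTp.comp (h : SameQfTp L M v w) (r : Fin m → Fin n) :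
    SameQfTp L M (v ∘ r) (w ∘ r) := by
  intro φ hφ
  simpa only [Formula.realize_relabel] using h (φ.relabel r) (hφ.relabel (Sum.inl ∘ r))

theorem SameQfTp.realize_eq_iff (h : SameQfTp L M v w) (t u : L.Term (Fin n)) :
    t.realize v = u.realize v ↔ t.realize w = u.realize w := by
  simpa only [Formula.realize_equal] using h (t.equal u) (BoundedFormula.IsAtomic.equal _ _).isQF

theorem SameQfTp.relMap_iff (h : SameQfTp L M v w) {l : ℕ} (R : L.Relations l)
    (ts : Fin l → L.Term (Fin n)) :
    (RelMap R fun i => (ts i).realize v) ↔ RelMap R fun i => (ts i).realize w := by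
  simpa only [Formula.realize_rel] using h (R.formula ts) (BoundedFormula.IsAtomic.rel _ _).isQF

theorem sameQfTp_embedding_comp {N : Type*} [L.Structure N] (E₁ E₂ : N ↪[L] M)
    (x : Fin n → N) : SameQfTp L M (E₁ ∘ x) (E₂ ∘ x) := by
  intro φ hφ
  have realize_comp (E : N ↪[L] M) : φ.Realize (E ∘ x) ↔ φ.Realize x := by
    simpa only [Formula.Realize, Unique.eq_default (E ∘ default)] using
      hφ.realize_embedding E (v := x) (xs := default)
  rw [realize_comp, realize_comp]

theorem exists_term_realize_eq {x : M} (hx : x ∈ closure L (range v)) :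
    ∃ t : L.Term (Fin n), t.realize v = x := by
  obtain ⟨t, rfl⟩ := mem_closure_iff_exists_term.1 hx
  refine ⟨t.relabel fun s => s.2.choose, ?_⟩
  rw [Term.realize_relabel]
  congr 1
  exact funext fun s => s.2.choose_spec

theorem term_realize_mem_closure (v : Fin n → M) (t : L.Term (Fin n)) :
    t.realize v ∈ closure L (range v) :=
  Term.realize_mem t v fun i => subset_closure (mem_range_self i)

theorem SameQfTp.coe_closure_range_eq_range (h : SameQfTp L M v w)
    (hv : (closure L (range v) : Set M) = range v) :
    (closure L (range w) : Set M) = range w := by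
  refine (Set.Subset.antisymm ?_ subset_closure)
  intro x hx
  obtain ⟨t, rfl⟩ := exists_term_realize_eq hx
  obtain ⟨i, hi⟩ : t.realize v ∈ range v := hv ▸ term_realize_mem_closure v t
  exact ⟨i, ((h.realize_eq_iff (Term.var i) t).1 hi).symm ▸ rfl⟩

end SameQfTp

section ClosureEquiv

variable {L : Language} {M : Type*} [L.Structure M] {n : ℕ} {v w : Fin n → M}

variable (L) in
def toClosureRange (v : Fin n → M) : Fin n → closure L (range v) :=
  fun i => ⟨v i, subset_closure (mem_range_self i)⟩

theorem closure_range_toClosureRange (v : Fin n → M) :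
    closure L (range (toClosureRange L v)) = ⊤ := by
  refine Substructure.map_injective_of_injective (f := (closure L (range v)).subtype.toHom)
    (closure L (range v)).subtype.injective ?_
  rw [map_closure, ← range_comp, ← Hom.range_eq_map, range_subtype]
  rfl

variable (L v w) in
/-- Only meaningful when `v` and `w` have the same quantifier-free type: then the value does not
depend on the chosen term. -/
noncomputable def closureTransfer : closure L (range v) → closure L (range w) :=
  fun x => ⟨(exists_term_realize_eq x.2).choose.realize w, term_realize_mem_closure w _⟩

theorem SameQfTp.coe_closureTransfer (h : SameQfTp L M v w) {x : closure L (range v)}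
    {t : L.Term (Fin n)} (ht : t.realize v = x) : (closureTransfer L v w x : M) = t.realize w :=
  (h.realize_eq_iff _ t).1 ((exists_term_realize_eq x.2).choose_spec.trans ht.symm)

theorem SameQfTp.closureTransfer_symm (h : SameQfTp L M v w) (x : closure L (range v)) :
    closureTransfer L w v (closureTransfer L v w x) = x := by
  obtain ⟨t, ht⟩ := exists_term_realize_eq x.2
  exact Subtype.ext ((h.symm.coe_closureTransfer (h.coe_closureTransfer ht).symm).trans ht)

noncomputable def SameQfTp.equiv (h : SameQfTp L M v w) :
    closure L (range v) ≃[L] closure L (range w) where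
  toFun := closureTransfer L v w
  invFun := closureTransfer L w v
  left_inv := h.closureTransfer_symm
  right_inv := h.symm.closureTransfer_symm
  map_fun' {l} F xs := by
    choose ts hts using fun i => exists_term_realize_eq (xs i).2
    apply Subtype.ext
    have hF : (Term.func F ts).realize v = (funMap F xs : closure L (range v)) := by
      simp only [Term.realize_func, hts]; rfl
    rw [h.coe_closureTransfer hF]
    exact congrArg (funMap F) (funext fun i => (h.coe_closureTransfer (hts i)).symm)
  map_rel' {l} R xs := by
    choose ts hts using fun i => exists_term_realize_eq (xs i).2
    change RelMap R (fun i => (closureTransfer L v w (xs i) : M)) ↔ RelMap R fun i => (xs i : M)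
    simp only [← hts, h.coe_closureTransfer (hts _)]
    exact (h.relMap_iff R ts).symm

theorem SameQfTp.coe_equiv_toClosureRange (h : SameQfTp L M v w) (i : Fin n) :
    (h.equiv (toClosureRange L v i) : M) = w i :=
  h.coe_closureTransfer (t := Term.var i) rfl

variable {S : L.Substructure M} (ψ : closure L (range v) ≃[L] S)

theorem sameQfTp_equiv_toClosureRange :
    SameQfTp L M v fun i => ψ (toClosureRange L v i) :=
  sameQfTp_embedding_comp (closure L (range v)).subtype (S.subtype.comp ψ.toEmbedding)
    (toClosureRange L v)

theorem closure_range_equiv_toClosureRange :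
    closure L (range fun i => (ψ (toClosureRange L v i) : M)) = S := by
  have hψ : closure L (range (ψ ∘ toClosureRange L v)) = ⊤ := by
    rw [range_comp, ← Equiv.coe_toHom, ← map_closure, closure_range_toClosureRange,
      ← Hom.range_eq_map, Equiv.toHom_range]
  rw [show (fun i => (ψ (toClosureRange L v i) : M)) = S.subtype ∘ ψ ∘ toClosureRange L v
    from rfl, range_comp, ← Embedding.coe_toHom, ← map_closure, hψ, ← Hom.range_eq_map,
    range_subtype]

end ClosureEquiv

section Order

variable {L : Language} {M N : Type*} [L.Structure M] [L.Structure N] [LinearOrder M]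
  {lt : L.Relations 2} (hlt : ∀ x y : M, RelMap lt ![x, y] ↔ x < y)
include hlt

theorem lt_iff_lt_of_embedding (E₁ E₂ : N ↪[L] M) (x y : N) : E₁ x < E₁ y ↔ E₂ x < E₂ y := by
  have relMap_iff (E : N ↪[L] M) : RelMap lt ![E x, E y] ↔ RelMap lt ![x, y] := by
    rw [← E.map_rel lt (![x, y])]
    exact iff_of_eq (congrArg _ (funext fun i => by fin_cases i <;> rfl))
  rw [← hlt, ← hlt, relMap_iff, relMap_iff]

/-- Isomorphisms preserve the order, and an order isomorphism out of a finite linear order is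
determined by its range. -/
theorem subsingleton_equiv (S T : L.Substructure M) [Finite S] : Subsingleton (S ≃[L] T) := by
  have strictMono (ψ : S ≃[L] T) : StrictMono fun x => (ψ x : M) := fun x y hxy =>
    (lt_iff_lt_of_embedding hlt S.subtype (T.subtype.comp ψ.toEmbedding) x y).1 hxy
  have range_eq (ψ : S ≃[L] T) : range (fun x => (ψ x : M)) = T := by
    rw [range_comp' Subtype.val ψ, ψ.surjective.range_eq, image_univ, Subtype.range_coe]
  refine ⟨fun ψ₁ ψ₂ => ?_⟩
  have h := ((strictMono ψ₁).range_inj (strictMono ψ₂)).1 ((range_eq ψ₁).trans (range_eq ψ₂).symm)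
  exact Language.Equiv.ext fun x => Subtype.ext (congrFun h x)

end Order

section Ramsey

/-- `RamseyClass` with the witness `C` taken as a substructure of a fixed ambient `M`. -/
def RamseyIn (L : Language) {M : Type*} [L.Structure M] (P Q : Type*) [L.Structure P]
    [L.Structure Q] (k : ℕ) (C : L.Substructure M) : Prop :=
  ∀ c : L.Substructure M → Fin k, ∃ Q' : L.Substructure M, Q' ≤ C ∧ Nonempty (Q ≃[L] Q') ∧
    ∀ P₁ P₂ : L.Substructure M, P₁ ≤ Q' → P₂ ≤ Q' →
      Nonempty (P ≃[L] P₁) → Nonempty (P ≃[L] P₂) → c P₁ = c P₂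

variable {L : Language} {M N : Type*} [L.Structure M] [L.Structure N]
  {P Q : Type*} [L.Structure P] [L.Structure Q] {k : ℕ}

theorem RamseyIn.of_equiv {P' Q' : Type*} [L.Structure P'] [L.Structure Q']
    {C : L.Substructure M} (h : RamseyIn L P Q k C) (eP : P ≃[L] P') (eQ : Q ≃[L] Q') :
    RamseyIn L P' Q' k C := by
  intro c
  obtain ⟨R, hRC, ⟨eR⟩, hmono⟩ := h c
  exact ⟨R, hRC, ⟨eR.comp eQ.symm⟩, fun P₁ P₂ h₁ h₂ ⟨e₁⟩ ⟨e₂⟩ =>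
    hmono P₁ P₂ h₁ h₂ ⟨e₁.comp eP⟩ ⟨e₂.comp eP⟩⟩

theorem ramseyIn_top_iff :
    RamseyIn L P Q k (⊤ : L.Substructure N) ↔
      ∀ c : L.Substructure N → Fin k, ∃ Q' : L.Substructure N, Nonempty (Q ≃[L] Q') ∧
        ∀ P₁ P₂ : L.Substructure N, P₁ ≤ Q' → P₂ ≤ Q' →
          Nonempty (P ≃[L] P₁) → Nonempty (P ≃[L] P₂) → c P₁ = c P₂ := by
  simp only [RamseyIn, le_top, true_and]

theorem map_comap_eq_of_le_map {f : N →[L] M} {S : L.Substructure N} {T : L.Substructure M}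
    (h : T ≤ S.map f) : (T.comap f).map f = T :=
  le_antisymm map_comap_le fun x hx => by
    obtain ⟨y, -, rfl⟩ := h hx
    exact ⟨y, hx, rfl⟩

theorem nonempty_equiv_of_eq {S T : L.Substructure M} (h : S = T) : Nonempty (S ≃[L] T) :=
  h ▸ ⟨Language.Equiv.refl L S⟩

theorem ramseyIn_map_iff (e : N ↪[L] M) (S : L.Substructure N) :
    RamseyIn L P Q k (S.map e.toHom) ↔ RamseyIn L P Q k S := by
  have comap_map (T : L.Substructure N) : (T.map e.toHom).comap e.toHom = T :=
    comap_map_eq_of_injective e.injective T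
  constructor
  · intro h c
    obtain ⟨R, hRS, ⟨eR⟩, hmono⟩ := h fun T => c (T.comap e.toHom)
    obtain ⟨eR'⟩ := nonempty_equiv_of_eq (map_comap_eq_of_le_map hRS)
    refine ⟨R.comap e.toHom, (monotone_comap hRS).trans (comap_map S).le,
      ⟨(e.substructureEquivMap _).symm.comp (eR'.symm.comp eR)⟩,
      fun P₁ P₂ h₁ h₂ ⟨e₁⟩ ⟨e₂⟩ => ?_⟩
    simpa only [comap_map] using hmono _ _ (map_le_iff_le_comap.2 h₁) (map_le_iff_le_comap.2 h₂)
      ⟨(e.substructureEquivMap P₁).comp e₁⟩ ⟨(e.substructureEquivMap P₂).comp e₂⟩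
  · intro h c
    obtain ⟨R, hRS, ⟨eR⟩, hmono⟩ := h fun T => c (T.map e.toHom)
    have pull (P₁ : L.Substructure M) (h₁ : P₁ ≤ R.map e.toHom) (i₁ : Nonempty (P ≃[L] P₁)) :
        P₁.comap e.toHom ≤ R ∧ Nonempty (P ≃[L] P₁.comap e.toHom) ∧
          (P₁.comap e.toHom).map e.toHom = P₁ := by
      have hP₁ := map_comap_eq_of_le_map h₁
      obtain ⟨e₁⟩ := i₁
      obtain ⟨eP₁⟩ := nonempty_equiv_of_eq hP₁
      exact ⟨(monotone_comap h₁).trans (comap_map R).le,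
        ⟨(e.substructureEquivMap _).symm.comp (eP₁.symm.comp e₁)⟩, hP₁⟩
    refine ⟨R.map e.toHom, monotone_map hRS, ⟨(e.substructureEquivMap R).comp eR⟩,
      fun P₁ P₂ h₁ h₂ i₁ i₂ => ?_⟩
    obtain ⟨hle₁, i₁', hP₁⟩ := pull P₁ h₁ i₁
    obtain ⟨hle₂, i₂', hP₂⟩ := pull P₂ h₂ i₂
    rw [← hP₁, ← hP₂]
    exact hmono _ _ hle₁ hle₂ i₁' i₂'

theorem ramseyClass_age_iff :
    RamseyClass L (L.age M) ↔
      ∀ P Q : Bundled L.Structure, P ∈ L.age M → Q ∈ L.age M → ∀ k : ℕ, 1 ≤ k →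
        ∃ C : L.Substructure M, C.FG ∧ RamseyIn L P Q k C := by
  constructor
  · intro h P Q hP hQ k hk
    obtain ⟨C, ⟨hCfg, ⟨e⟩⟩, hC⟩ := h P Q hP hQ k hk
    refine ⟨e.toHom.range, hCfg.range e.toHom, ?_⟩
    rw [Hom.range_eq_map, ramseyIn_map_iff]
    exact ramseyIn_top_iff.2 hC
  · intro h P Q hP hQ k hk
    obtain ⟨C, hCfg, hC⟩ := h P Q hP hQ k hk
    refine ⟨Bundled.mk C, age.fg_substructure hCfg, ramseyIn_top_iff.1 ?_⟩
    rwa [← ramseyIn_map_iff C.subtype, ← Hom.range_eq_map, range_subtype]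

theorem exists_tuple_of_mem_age (hloc : ∀ S : L.Substructure M, S.FG → (S : Set M).Finite)
    {P : Bundled L.Structure} (hP : P ∈ L.age M) :
    ∃ (n : ℕ) (v : Fin n → M), Nonempty (P ≃[L] closure L (range v)) ∧
      (closure L (range v) : Set M) = range v := by
  obtain ⟨hPfg, ⟨e⟩⟩ := hP
  obtain ⟨n, v, hv⟩ := (hloc _ (hPfg.range e.toHom)).fin_embedding
  have hcl : closure L (range v) = e.toHom.range := by rw [hv, closure_eq]
  exact ⟨n, v, hcl ▸ ⟨e.equivRange⟩, by rw [hcl, hv]⟩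

end Ramsey

section Transfer

variable {LA LB : Language} {A B : Type*} [LA.Structure A] [LB.Structure B] {k m n : ℕ}

theorem SemiRetractionWitness.sameQfTp_comp {g : A → B} {f : B → A}
    (h : SemiRetractionWitness LA A LB B g f) (s : Fin n → A) :
    SameQfTp LA A s (f ∘ g ∘ s) := fun φ hφ =>
  ⟨h.2.2.2.2 n φ hφ s, fun hfgs => by_contra fun hs => h.2.2.2.2 n φ.not hφ.not s hs hfgs⟩

variable (LB) in
open Classical in
noncomputable def pullbackColoring (χ : LA.Substructure A → Fin k) (f : B → A) (u : Fin m → B) :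
    LB.Substructure B → Fin k := fun D =>
  if h : Nonempty (closure LB (range u) ≃[LB] D) then
    χ (closure LA (range fun i => f (h.some (toClosureRange LB u i))))
  else χ ⊥

theorem pullbackColoring_eq {χ : LA.Substructure A → Fin k} {f : B → A} {u : Fin m → B}
    {D : LB.Substructure B} (hD : Subsingleton (closure LB (range u) ≃[LB] D))
    (ψ : closure LB (range u) ≃[LB] D) :
    pullbackColoring LB χ f u D = χ (closure LA (range fun i => f (ψ (toClosureRange LB u i)))) := by
  have h : Nonempty (closure LB (range u) ≃[LB] D) := ⟨ψ⟩
  rw [pullbackColoring, dif_pos h, Subsingleton.elim h.some ψ]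

/-- The copy of `⟨b⟩` in `⟨f(C)⟩` is `⟨f(b')⟩`, where `⟨b'⟩ ⊆ C` is a monochromatic copy of `⟨g(b)⟩`
for the pulled back coloring. A copy `⟨e⟩` of `⟨a⟩` inside it has the form `e = f(b' ∘ r)` because
`⟨f(b')⟩` is closed; then `⟨b' ∘ r⟩` is a copy of `⟨g(a)⟩` in `⟨b'⟩` of the same color as `⟨e⟩`. The
order on `B` makes that copy's isomorphism unique, so the pulled back color does not depend on the
choice of isomorphism. -/
theorem ramseyIn_closure_image_of_semiRetraction {g : A → B} {f : B → A}
    (hg : QfTpPreserving LA A LB B g) (hf : QfTpPreserving LB B LA A f)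
    (hfg : ∀ {n : ℕ} (s : Fin n → A), SameQfTp LA A s (f ∘ g ∘ s))
    [LinearOrder B] {lt : LB.Relations 2} (hlt : ∀ x y : B, RelMap lt ![x, y] ↔ x < y)
    (a : Fin m → A) (b : Fin n → A) (hb : (closure LA (range b) : Set A) = range b)
    (ha : (closure LB (range (g ∘ a)) : Set B).Finite) {C : LB.Substructure B}
    (hC : RamseyIn LB (closure LB (range (g ∘ a))) (closure LB (range (g ∘ b))) k C) :
    RamseyIn LA (closure LA (range a)) (closure LA (range b)) k (closure LA (f '' C)) := by
  intro χ
  have : Finite (closure LB (range (g ∘ a))) := ha.to_subtype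
  obtain ⟨R, hRC, ⟨θ⟩, hmono⟩ := hC (pullbackColoring LB χ f (g ∘ a))
  set b' : Fin n → B := fun j => θ (toClosureRange LB (g ∘ b) j)
  have hb'R (j : Fin n) : b' j ∈ R := (θ _).2
  have hb' : SameQfTp LB B (g ∘ b) b' := sameQfTp_equiv_toClosureRange θ
  have hfb' : SameQfTp LA A b (f ∘ b') := (hfg b).trans (hf _ _ _ hb')
  have hclosed := hfb'.coe_closure_range_eq_range hb
  have key (A₁ : LA.Substructure A) (hA₁ : A₁ ≤ closure LA (range (f ∘ b')))
      (iso : Nonempty (closure LA (range a) ≃[LA] A₁)) :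
      ∃ D ≤ R, Nonempty (closure LB (range (g ∘ a)) ≃[LB] D) ∧
        pullbackColoring LB χ f (g ∘ a) D = χ A₁ := by
    obtain ⟨ψ⟩ := iso
    have hr (i : Fin m) : ∃ j, f (b' j) = ψ (toClosureRange LA a i) := by
      rw [← mem_range, ← Function.comp_def, ← hclosed]
      exact hA₁ (ψ _).2
    choose r hr using hr
    have hab : SameQfTp LA A a (b ∘ r) :=
      (sameQfTp_equiv_toClosureRange ψ).trans ((funext hr : f ∘ b' ∘ r = _) ▸ (hfb'.comp r).symm)
    have hgab : SameQfTp LB B (g ∘ a) (b' ∘ r) := (hg _ _ _ hab).trans (hb'.comp r)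
    refine ⟨closure LB (range (b' ∘ r)), closure_le.2 (range_subset_iff.2 fun i => hb'R (r i)),
      ⟨hgab.equiv⟩, ?_⟩
    rw [pullbackColoring_eq (subsingleton_equiv hlt _ _) hgab.equiv,
      ← closure_range_equiv_toClosureRange ψ]
    simp only [hgab.coe_equiv_toClosureRange, Function.comp_apply, hr]
  refine ⟨closure LA (range (f ∘ b')), closure_mono ?_, ⟨hfb'.equiv⟩,
    fun A₁ A₂ h₁ h₂ i₁ i₂ => ?_⟩
  · rintro _ ⟨j, rfl⟩
    exact mem_image_of_mem f (hRC (hb'R j))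
  · obtain ⟨D₁, hD₁, iso₁, hc₁⟩ := key A₁ h₁ i₁
    obtain ⟨D₂, hD₂, iso₂, hc₂⟩ := key A₂ h₂ i₂
    rw [← hc₁, ← hc₂]
    exact hmono D₁ D₂ hD₁ hD₂ iso₁ iso₂

end Transfer

end SRPaper

open SRPaper in
theorem statement3_general (LA : Language) (A : Type) [LA.Structure A]
    (hlocfinA : ∀ S : LA.Substructure A, S.FG → (S : Set A).Finite)
    (LB : Language) (B : Type) [LB.Structure B] [LinearOrder B]
    (ltB : LB.Relations 2) (hltB : ∀ a b : B, Structure.RelMap ltB ![a, b] ↔ a < b)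
    (hlocfinB : ∀ S : LB.Substructure B, S.FG → (S : Set B).Finite)
    (hsr : IsSemiRetractionOf LA A LB B)
    (hRP : RamseyClass LB (LB.age B)) :
    RamseyClass LA (LA.age A) := by
  obtain ⟨g, f, hgf⟩ := hsr
  rw [ramseyClass_age_iff] at hRP ⊢
  intro P Q hP hQ k hk
  obtain ⟨m, a, ⟨eP⟩, -⟩ := exists_tuple_of_mem_age hlocfinA hP
  obtain ⟨n, b, ⟨eQ⟩, hb⟩ := exists_tuple_of_mem_age hlocfinA hQ
  have fg_span {l : ℕ} (u : Fin l → B) : (Substructure.closure LB (Set.range u)).FG :=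
    Substructure.fg_closure (Set.finite_range u)
  obtain ⟨C, hCfg, hC⟩ := hRP _ _ (age.fg_substructure (fg_span (g ∘ a)))
    (age.fg_substructure (fg_span (g ∘ b))) k hk
  refine ⟨Substructure.closure LA (f '' C), Substructure.fg_closure ((hlocfinB C hCfg).image f), ?_⟩
  exact (ramseyIn_closure_image_of_semiRetraction hgf.2.2.1 hgf.2.2.2.1 hgf.sameQfTp_comp hltB a b hb
    (hlocfinB _ (fg_span _)) hC).of_equiv eP.symm eQ.symm

open SRPaper in
/-- For countable, locally finite, linearly ordered structures `A` and `B`,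
if `A` is a semi-retraction of `B` and `age(B)` has the Ramsey property, then `age(A)` has
the Ramsey property. -/
theorem statement3 (LA : Language) (A : Type) [LA.Structure A] [Countable A] [LinearOrder A]
    (ltA : LA.Relations 2) (hltA : ∀ a b : A, Structure.RelMap ltA ![a, b] ↔ a < b)
    (hlocfinA : ∀ S : LA.Substructure A, S.FG → (S : Set A).Finite)
    (LB : Language) (B : Type) [LB.Structure B] [Countable B] [LinearOrder B]
    (ltB : LB.Relations 2) (hltB : ∀ a b : B, Structure.RelMap ltB ![a, b] ↔ a < b)
    (hlocfinB : ∀ S : LB.Substructure B, S.FG → (S : Set B).Finite)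
    (hsr : IsSemiRetractionOf LA A LB B)
    (hRP : RamseyClass LB (LB.age B)) :
    RamseyClass LA (LA.age A) :=
  statement3_general LA A hlocfinA LB B ltB hltB hlocfinB hsr hRP
end

section
/- Let O be a linear order and for each i in O let M_i be a countable relational structure linearly ordered by <. If each age(M_i) has the hereditary property (HP), the joint embedding property (JEP), and the amalgamation property (AP), then age(U_{i in O}(M_i)) has HP, JEP, and AP. -/
open FirstOrder FirstOrder.Language FirstOrder.Language.Structure CategoryTheory

namespace SRPaper

/-! ### Disjoint unions and semi-direct product structures

An "ordered `L`-structure" is modelled as a type with an `L.Structure` instance (for the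
relations other than `<`) together with a `LinearOrder` instance (interpreting `<`); its full
language is `L.sum Language.order`. -/

attribute [local instance] FirstOrder.Language.orderStructure

/-- Relation symbols `E`: a single binary symbol. -/
inductive EqSymb : ℕ → Type
  | E : EqSymb 2

/-- The language `{E}` with one binary relation. -/
def langE : Language := ⟨fun _ => Empty, EqSymb⟩

/-- Unary predicate symbols `P i` for `i : O`. -/
inductive PredSymb (O : Type) : ℕ → Type
  | P (i : O) : PredSymb O 1

/-- The language `{P_i : i ∈ O}` of unary predicates. -/
def langP (O : Type) : Language := ⟨fun _ => Empty, PredSymb O⟩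

/-- A single binary relation symbol (for graphs). -/
inductive GrSymb : ℕ → Type
  | adj : GrSymb 2

/-- The language of graphs: one binary relation. -/
def langGr : Language := ⟨fun _ => Empty, GrSymb⟩

instance : langGr.IsRelational := fun _ => inferInstanceAs (IsEmpty Empty)

section Constructions

variable (O : Type) [LinearOrder O]

/-- Interpretation of a relational language `L1` on the disjoint union `Σₗ i, M i`,
where each relation is computed fiberwise (and fails on tuples meeting several fibers). -/
def fiberStructure (L1 : Language) [L1.IsRelational] (M : O → Type)
    [∀ i, L1.Structure (M i)] : L1.Structure (Σₗ i, M i) where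
  funMap := fun f _ => isEmptyElim f
  RelMap := fun {n} r v =>
    ∃ (i : O) (w : Fin n → M i), (∀ k, v k = toLex ⟨i, w k⟩) ∧ Structure.RelMap r w

/-- Interpretation of a relational language `L2` on the disjoint union `Σₗ i, M i` via the
projection to the index structure `O`. -/
def projStructure (L2 : Language) [L2.IsRelational] [L2.Structure O] (M : O → Type) :
    L2.Structure (Σₗ i, M i) where
  funMap := fun f _ => isEmptyElim f
  RelMap := fun {n} r v => Structure.RelMap r fun k => (ofLex (v k)).1

/-- Interpretation of `E` on `Σₗ i, M i`: the equivalence relation whose classes are the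
fibers `M i`. -/
def eqClassStructure (M : O → Type) : langE.Structure (Σₗ i, M i) where
  funMap := fun f _ => Empty.elim f
  RelMap := fun {n} r v =>
    match n, r, v with
    | _, EqSymb.E, v => (ofLex (v 0)).1 = (ofLex (v 1)).1

/-- Interpretation of the predicates `P i` on `Σₗ i, M i`: `P i` names the fiber `M i`. -/
def predStructure (M : O → Type) : (langP O).Structure (Σₗ i, M i) where
  funMap := fun f _ => Empty.elim f
  RelMap := fun {n} r v =>
    match n, r, v with
    | _, PredSymb.P i, v => (ofLex (v 0)).1 = i

/-- The language of `U_{i ∈ O}(M_i)`: the (common) language of the `M_i`, the order `<`,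
and the unary predicates `P_i`. -/
def langU (L1 : Language) (O : Type) : Language := (L1.sum Language.order).sum (langP O)

/-- The structure `U_{i ∈ O}(M_i)` on the disjoint union `Σₗ i, M i`: relations of `L1` are
computed fiberwise, `<` is the lexicographic order (fibers are convex, ordered by `O`), and
`P i` names the fiber `M i`. -/
instance uStructure (L1 : Language) [L1.IsRelational] (M : O → Type)
    [∀ i, L1.Structure (M i)] [∀ i, LinearOrder (M i)] :
    (langU L1 O).Structure (Σₗ i, M i) :=
  letI := fiberStructure O L1 M
  letI := predStructure O M
  inferInstanceAs (((L1.sum Language.order).sum (langP O)).Structure (Σₗ i, M i))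

/-- The language `L1 ∪ {<} ∪ {E}` (the reduct language of a semi-direct product, and the
language of `O(M_i | i ∈ I)` when the index structure is a pure linear order). -/
def langRed (L1 : Language) : Language := (L1.sum Language.order).sum langE

/-- The `L1 ∪ {<} ∪ {E}`-structure on `Σₗ i, M i`: relations of `L1` fiberwise, `<` the
lexicographic order, `E` the equivalence relation whose classes are the fibers.  For a pure
linear order index this is the structure `O(M_i | i ∈ O)`. -/
instance redStructure (L1 : Language) [L1.IsRelational] (M : O → Type)
    [∀ i, L1.Structure (M i)] [∀ i, LinearOrder (M i)] :
    (langRed L1).Structure (Σₗ i, M i) :=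
  letI := fiberStructure O L1 M
  letI := eqClassStructure O M
  inferInstanceAs (((L1.sum Language.order).sum langE).Structure (Σₗ i, M i))

/-- The language `L2 ∪ L1 ∪ {E}` (with the shared order `<`) of a semi-direct product
structure. -/
def langSD (L1 L2 : Language) : Language := (langRed L1).sum L2

/-- The semi-direct product structure `𝕀 = I-script_{i ∈ I}(M_i)` on `Σₗ i, M i`:
relations of `L1` fiberwise, `<` the lexicographic order, `E` the fiber equivalence
relation, and relations of `L2` computed from the index structure via the projection. -/
instance sdStructure (L2 : Language) [L2.IsRelational] [L2.Structure O]
    (L1 : Language) [L1.IsRelational] (M : O → Type)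
    [∀ i, L1.Structure (M i)] [∀ i, LinearOrder (M i)] :
    (langSD L1 L2).Structure (Σₗ i, M i) :=
  letI := projStructure O L2 M
  inferInstanceAs (((langRed L1).sum L2).Structure (Σₗ i, M i))

end Constructions

/-- The underlying set of the "underlying graph" `gr(ā)` of a tuple from a semi-direct
product structure: the set of indices whose fiber meets the tuple. -/
def grSet {O : Type} {M : O → Type} {n : ℕ} (a : Fin n → (Σₗ i, M i)) : Set O :=
  {t | ∃ k, (ofLex (a k)).1 = t}

/-- The full language of ordered graphs: one binary relation and the order. -/
def langOG : Language := langGr.sum Language.order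

/-- A finite or countable `langOG`-structure is an ordered graph when the binary relation is
irreflexive and symmetric and the order symbol is interpreted as a linear order. -/
def IsOrderedGraph (N : Type*) [langOG.Structure N] : Prop :=
  (∀ x : N, ¬ Structure.RelMap (L := langOG) (Sum.inl GrSymb.adj) ![x, x]) ∧
  (∀ x y : N, Structure.RelMap (L := langOG) (Sum.inl GrSymb.adj) ![x, y] →
    Structure.RelMap (L := langOG) (Sum.inl GrSymb.adj) ![y, x]) ∧
  IsLinearOrder N (fun a b =>
    Structure.RelMap (L := langOG) (Sum.inr Language.orderRel.le) ![a, b])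

/-- A random ordered graph: a countable structure that is a Fraïssé limit of the class of
finite ordered graphs. -/
def IsRandomOrderedGraph (G : Type) [langGr.Structure G] [LinearOrder G] [Countable G] : Prop :=
  letI : langOG.Structure G := inferInstanceAs ((langGr.sum Language.order).Structure G)
  haveI : ∀ l, IsEmpty (langOG.Functions l) := fun _ => inferInstanceAs (IsEmpty (Empty ⊕ Empty))
  IsFraisseLimit {N : CategoryTheory.Bundled langOG.Structure | Finite N ∧ IsOrderedGraph N} G

end SRPaper

attribute [local instance] FirstOrder.Language.orderStructure

section Statement7Aux

open SRPaper

namespace SRPaper7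

instance instLangPRel (O : Type) : (langP O).IsRelational :=
  fun _ => inferInstanceAs (IsEmpty Empty)

variable {O : Type} [LinearOrder O] {L1 : Language} [L1.IsRelational] {M : O → Type}
  [∀ i, L1.Structure (M i)] [∀ i, LinearOrder (M i)]

lemma mkLex_inj {i : O} {a b : M i} (h : (toLex ⟨i, a⟩ : Σₗ j, M j) = toLex ⟨i, b⟩) : a = b := by
  have h' : (⟨i, a⟩ : Σ j, M j) = ⟨i, b⟩ := h
  simpa using h'

/-- component of `u` at its fiber, transported to `j`. -/
def compAt (u : Σₗ j, M j) (j : O) (h : (ofLex u).1 = j) : M j := h ▸ (ofLex u).2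

lemma compAt_spec (u : Σₗ j, M j) (j : O) (h : (ofLex u).1 = j) :
    u = toLex ⟨j, compAt u j h⟩ := by subst h; rfl

lemma lex_mk_le {i : O} {a b : M i} :
    (toLex ⟨i, a⟩ : Σₗ j, M j) ≤ toLex ⟨i, b⟩ ↔ a ≤ b := by
  constructor
  · intro h
    rcases Sigma.Lex.le_def.mp h with hlt | ⟨h', hle⟩
    · exact absurd hlt (lt_irrefl i)
    · exact hle
  · intro h
    exact Sigma.Lex.le_def.mpr (Or.inr ⟨rfl, h⟩)

lemma lex_mk_le_of_ne {i j : O} (hne : i ≠ j) {a : M i} {b : M j} :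
    ((toLex ⟨i, a⟩ : Σₗ k, M k) ≤ toLex ⟨j, b⟩) ↔ i < j := by
  constructor
  · intro h
    rcases Sigma.Lex.le_def.mp h with hlt | ⟨h', _⟩
    · exact hlt
    · exact absurd h' hne
  · intro h; exact Sigma.Lex.le_def.mpr (Or.inl h)

lemma relMap_inl_inl {n : ℕ} (r : L1.Relations n) (v : Fin n → (Σₗ j, M j)) :
    Structure.RelMap (L := langU L1 O) (Sum.inl (Sum.inl r)) v ↔
      ∃ (j : O) (w : Fin n → M j), (∀ k, v k = toLex ⟨j, w k⟩) ∧ Structure.RelMap r w := Iff.rfl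

lemma relMap_inl_inr (v : Fin 2 → (Σₗ j, M j)) :
    Structure.RelMap (L := langU L1 O) (Sum.inl (Sum.inr .le)) v ↔ v 0 ≤ v 1 := Iff.rfl

lemma relMap_P {i : O} (v : Fin 1 → (Σₗ j, M j)) :
    Structure.RelMap (L := langU L1 O) (Sum.inr (PredSymb.P i)) v ↔ (ofLex (v 0)).1 = i := Iff.rfl

lemma relMap_Mi_le {i : O} (v : Fin 2 → M i) :
    Structure.RelMap (L := L1.sum Language.order) (Sum.inr .le) v ↔ v 0 ≤ v 1 := Iff.rfl

lemma relMap_Mi_inl {i : O} {n : ℕ} (r : L1.Relations n) (v : Fin n → M i) :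
    Structure.RelMap (L := L1.sum Language.order) (Sum.inl r) v ↔ Structure.RelMap r v := Iff.rfl

lemma relMap_sub {L : Language} {M₀ : Type*} [L.Structure M₀] (S : L.Substructure M₀) {n : ℕ}
    (r : L.Relations n) (v : Fin n → S) :
    Structure.RelMap r v ↔ Structure.RelMap r (fun k => (v k : M₀)) := Iff.rfl

set_option linter.unusedSectionVars false

lemma relMap_fiber_iff {n : ℕ} (hn : n ≠ 0) {i : O} (r : L1.Relations n) (x : Fin n → M i) :
    Structure.RelMap (L := langU L1 O) (Sum.inl (Sum.inl r))
      (fun k => (toLex ⟨i, x k⟩ : Σₗ j, M j)) ↔ Structure.RelMap r x := by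
  rw [relMap_inl_inl]
  constructor
  · rintro ⟨j, w, h, hr⟩
    obtain ⟨k0⟩ : Nonempty (Fin n) := ⟨⟨0, Nat.pos_of_ne_zero hn⟩⟩
    have hij : i = j := congrArg (fun u => (ofLex u).1) (h k0)
    subst hij
    have hxw : x = w := funext fun k => mkLex_inj (h k)
    rw [hxw]; exact hr
  · intro hr
    exact ⟨i, x, fun _ => rfl, hr⟩

lemma relMap_fiber_iff' {n : ℕ} (hn : n ≠ 0) {i : O} (r : (L1.sum Language.order).Relations n)
    (x : Fin n → M i) :
    Structure.RelMap (L := langU L1 O) (Sum.inl r)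
      (fun k => (toLex ⟨i, x k⟩ : Σₗ j, M j)) ↔
      Structure.RelMap (L := L1.sum Language.order) r x := by
  cases r with
  | inl r => exact (relMap_fiber_iff hn r x).trans (relMap_Mi_inl r x).symm
  | inr r =>
    cases r
    rw [relMap_inl_inr, relMap_Mi_le]
    exact lex_mk_le

instance instLangURel (O : Type) (L1 : Language) [L1.IsRelational] :
    (langU L1 O).IsRelational :=
  inferInstanceAs ((L1.sum Language.order).sum (langP O)).IsRelational

section WithB

variable {B : Type*} [(langU L1 O).Structure B]

def fibSet (e : B ↪[langU L1 O] (Σₗ j, M j)) (j : O) : Set (M j) :=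
  {x | ∃ b, e b = toLex ⟨j, x⟩}

def fibSub (e : B ↪[langU L1 O] (Σₗ j, M j)) (j : O) :
    (L1.sum Language.order).Substructure (M j) :=
  Substructure.closure _ (fibSet e j)

lemma mem_fibSub {e : B ↪[langU L1 O] (Σₗ j, M j)} {j : O} {x : M j} :
    x ∈ fibSub e j ↔ ∃ b, e b = toLex ⟨j, x⟩ :=
  Substructure.mem_closure_iff_of_isRelational _ _ _

lemma fibSet_finite (e : B ↪[langU L1 O] (Σₗ j, M j)) [Finite B] (j : O) :
    (fibSet e j).Finite := by
  haveI : Finite ↥(fibSet e j) := by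
    have hf : ∀ x : ↥(fibSet e j), ∃ b, e b = toLex ⟨j, (x : M j)⟩ := fun x => x.2
    apply Finite.of_injective (fun x : ↥(fibSet e j) => (hf x).choose)
    intro x y hxy
    have hxy' : (hf x).choose = (hf y).choose := hxy
    apply Subtype.ext
    have hx := (hf x).choose_spec
    have hy := (hf y).choose_spec
    rw [hxy'] at hx
    exact mkLex_inj (hx.symm.trans hy)
  exact Set.toFinite _

def fmapU (t : ∀ j, M j → M j) : (Σₗ j, M j) → (Σₗ j, M j) :=
  fun u => toLex ⟨(ofLex u).1, t _ (ofLex u).2⟩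

lemma fmapU_mk (t : ∀ j, M j → M j) (j : O) (x : M j) :
    fmapU t (toLex ⟨j, x⟩) = toLex ⟨j, t j x⟩ := rfl

structure GoodT (e : B ↪[langU L1 O] (Σₗ j, M j)) (t : ∀ j, M j → M j) : Prop where
  inj : ∀ j, ∀ x ∈ fibSet e j, ∀ y ∈ fibSet e j, t j x = t j y → x = y
  le : ∀ j, ∀ x ∈ fibSet e j, ∀ y ∈ fibSet e j, (t j x ≤ t j y ↔ x ≤ y)
  rel : ∀ (j : O) (n : ℕ) (r : L1.Relations n) (x : Fin n → M j),
    (∀ k, x k ∈ fibSet e j) →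
      (Structure.RelMap r (fun k => t j (x k)) ↔ Structure.RelMap r x)

def builder (e : B ↪[langU L1 O] (Σₗ j, M j)) (t : ∀ j, M j → M j) (ht : GoodT e t) :
    B ↪[langU L1 O] (Σₗ j, M j) where
  toFun := fun b => fmapU t (e b)
  inj' := by
    intro b b' h
    apply e.injective
    have hj : (ofLex (e b')).1 = (ofLex (e b)).1 := (congrArg (fun u => (ofLex u).1) h).symm
    have hb : e b = toLex ⟨(ofLex (e b)).1, compAt (e b) _ rfl⟩ := compAt_spec _ _ rfl
    have hb' : e b' = toLex ⟨(ofLex (e b)).1, compAt (e b') _ hj⟩ := compAt_spec _ _ hj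
    have hmem : compAt (e b) _ rfl ∈ fibSet e ((ofLex (e b)).1) := ⟨b, hb⟩
    have hmem' : compAt (e b') _ hj ∈ fibSet e ((ofLex (e b)).1) := ⟨b', hb'⟩
    have h2 : fmapU t (e b) = fmapU t (e b') := h
    rw [hb, hb'] at h2 ⊢
    rw [fmapU_mk, fmapU_mk] at h2
    exact congrArg (fun y : M ((ofLex (e b)).1) => (toLex ⟨(ofLex (e b)).1, y⟩ : Σₗ j, M j))
      (ht.inj _ _ hmem _ hmem' (mkLex_inj h2))
  map_fun' := fun f => isEmptyElim f
  map_rel' := by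
    intro n r v
    cases r with
    | inl r =>
      cases r with
      | inl r =>
        have hL : Structure.RelMap (L := langU L1 O) (Sum.inl (Sum.inl r)) v ↔
            ∃ (j : O) (w : Fin n → M j), (∀ k, e (v k) = toLex ⟨j, w k⟩) ∧
              Structure.RelMap r w :=
          (e.map_rel' _ v).symm.trans (relMap_inl_inl r _)
        rw [hL, relMap_inl_inl]
        constructor
        · rintro ⟨j, w, h, hr⟩
          have hj : ∀ k, (ofLex (e (v k))).1 = j :=
            fun k => congrArg (fun u => (ofLex u).1) (h k)
          refine ⟨j, fun k => compAt (e (v k)) j (hj k), fun k => compAt_spec _ _ _, ?_⟩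
          have hmem : ∀ k, compAt (e (v k)) j (hj k) ∈ fibSet e j :=
            fun k => ⟨v k, compAt_spec _ _ _⟩
          have hw : ∀ k, t j (compAt (e (v k)) j (hj k)) = w k := by
            intro k
            have h' : fmapU t (e (v k)) = toLex ⟨j, w k⟩ := h k
            rw [compAt_spec (e (v k)) j (hj k), fmapU_mk] at h'
            exact mkLex_inj h'
          have : (fun k => t j (compAt (e (v k)) j (hj k))) = w := funext hw
          rw [← this] at hr
          exact (ht.rel j n r _ hmem).mp hr
        · rintro ⟨j, w, h, hr⟩
          refine ⟨j, fun k => t j (w k), fun k => ?_, ?_⟩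
          · show fmapU t (e (v k)) = _
            rw [h k, fmapU_mk]
          · exact (ht.rel j n r w (fun k => ⟨v k, h k⟩)).mpr hr
      | inr r =>
        cases r
        have hR : Structure.RelMap (L := langU L1 O) (Sum.inl (Sum.inr .le)) v ↔
            e (v 0) ≤ e (v 1) :=
          (e.map_rel' _ v).symm.trans (relMap_inl_inr _)
        rw [hR, relMap_inl_inr]
        show fmapU t (e (v 0)) ≤ fmapU t (e (v 1)) ↔ _
        have key : ∀ u u' : Σₗ j, M j, (∃ b, e b = u) → (∃ b, e b = u') →
            (fmapU t u ≤ fmapU t u' ↔ u ≤ u') := by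
          intro u u' hu hu'
          obtain ⟨j, x, rfl⟩ : ∃ j x, toLex ⟨j, x⟩ = u := ⟨_, _, (compAt_spec u _ rfl).symm⟩
          obtain ⟨j', x', rfl⟩ : ∃ j x, toLex ⟨j, x⟩ = u' := ⟨_, _, (compAt_spec u' _ rfl).symm⟩
          rw [fmapU_mk, fmapU_mk]
          rcases eq_or_ne j j' with rfl | hne
          · rw [lex_mk_le, lex_mk_le]
            exact ht.le j _ hu _ hu'
          · rw [lex_mk_le_of_ne hne, lex_mk_le_of_ne hne]
        exact key _ _ ⟨v 0, rfl⟩ ⟨v 1, rfl⟩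
    | inr r =>
      cases r with
      | P i => exact e.map_rel' (Sum.inr (PredSymb.P i)) v

noncomputable def tmap (e : B ↪[langU L1 O] (Σₗ j, M j))
    (g : ∀ j, ↥(fibSub e j) ↪[L1.sum Language.order] M j) : ∀ j, M j → M j :=
  fun j x =>
    letI := Classical.propDecidable (x ∈ fibSet e j)
    if h : x ∈ fibSet e j then g j ⟨x, Substructure.subset_closure h⟩ else x

lemma tmap_eq {e : B ↪[langU L1 O] (Σₗ j, M j)}
    (g : ∀ j, ↥(fibSub e j) ↪[L1.sum Language.order] M j) {j : O} {x : M j}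
    (h : x ∈ fibSet e j) :
    tmap e g j x = g j ⟨x, Substructure.subset_closure h⟩ := by
  unfold tmap
  exact dif_pos h

lemma goodT_tmap (e : B ↪[langU L1 O] (Σₗ j, M j))
    (g : ∀ j, ↥(fibSub e j) ↪[L1.sum Language.order] M j) : GoodT e (tmap e g) where
  inj j x hx y hy hxy := by
    rw [tmap_eq g hx, tmap_eq g hy] at hxy
    exact congrArg Subtype.val ((g j).injective hxy)
  le j x hx y hy := by
    rw [tmap_eq g hx, tmap_eq g hy]
    exact (g j).map_rel' (Sum.inr .le)
      ![⟨x, Substructure.subset_closure hx⟩, ⟨y, Substructure.subset_closure hy⟩]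
  rel j n r x hx := by
    have hfun : (fun k => tmap e g j (x k)) =
        fun k => g j ⟨x k, Substructure.subset_closure (hx k)⟩ :=
      funext fun k => tmap_eq g (hx k)
    rw [hfun]
    exact (g j).map_rel' (Sum.inl r) (fun k => ⟨x k, Substructure.subset_closure (hx k)⟩)

end WithB

section WithA

variable {A : Type*} [(langU L1 O).Structure A]

lemma fib_eq_fib (e1 e2 : A ↪[langU L1 O] (Σₗ j, M j)) (a : A) :
    (ofLex (e1 a)).1 = (ofLex (e2 a)).1 := by
  have h1 := e1.map_rel' (Sum.inr (PredSymb.P ((ofLex (e1 a)).1))) (fun _ : Fin 1 => a)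
  have h2 := e2.map_rel' (Sum.inr (PredSymb.P ((ofLex (e1 a)).1))) (fun _ : Fin 1 => a)
  exact (h2.mpr (h1.mp rfl)).symm

lemma psiAux (e1 : A ↪[langU L1 O] (Σₗ j, M j)) (i : O) (x : ↥(fibSub e1 i)) :
    ∃ a : A, e1 a = toLex ⟨i, (x : M i)⟩ := mem_fibSub.mp x.2

noncomputable def psiFun (e1 e2 : A ↪[langU L1 O] (Σₗ j, M j)) (i : O)
    (x : ↥(fibSub e1 i)) : M i :=
  compAt (e2 (psiAux e1 i x).choose) i
    ((fib_eq_fib e1 e2 _).symm.trans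
      (show (ofLex (e1 (psiAux e1 i x).choose)).1 = i by
        rw [(psiAux e1 i x).choose_spec]
        exact rfl))

lemma psiFun_spec (e1 e2 : A ↪[langU L1 O] (Σₗ j, M j)) (i : O) (x : ↥(fibSub e1 i)) :
    ∃ a : A, e1 a = toLex ⟨i, (x : M i)⟩ ∧ e2 a = toLex ⟨i, psiFun e1 e2 i x⟩ :=
  ⟨(psiAux e1 i x).choose, (psiAux e1 i x).choose_spec, compAt_spec _ _ _⟩

lemma psiFun_eq (e1 e2 : A ↪[langU L1 O] (Σₗ j, M j)) (i : O) {a : A}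
    {x : ↥(fibSub e1 i)} {y : M i}
    (h1 : e1 a = toLex ⟨i, (x : M i)⟩) (h2 : e2 a = toLex ⟨i, y⟩) :
    psiFun e1 e2 i x = y := by
  obtain ⟨a', h1', h2'⟩ := psiFun_spec e1 e2 i x
  have haa : a' = a := e1.injective (h1'.trans h1.symm)
  subst haa
  exact mkLex_inj (h2'.symm.trans h2)

noncomputable def psi (e1 e2 : A ↪[langU L1 O] (Σₗ j, M j)) (i : O) :
    ↥(fibSub e1 i) ↪[L1.sum Language.order] ↥(fibSub e2 i) where
  toFun x := ⟨psiFun e1 e2 i x, by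
    obtain ⟨a, h1, h2⟩ := psiFun_spec e1 e2 i x
    exact Substructure.subset_closure ⟨a, h2⟩⟩
  inj' := by
    intro x y hxy
    obtain ⟨a, ha1, ha2⟩ := psiFun_spec e1 e2 i x
    obtain ⟨b, hb1, hb2⟩ := psiFun_spec e1 e2 i y
    have hval : psiFun e1 e2 i x = psiFun e1 e2 i y := congrArg Subtype.val hxy
    have hab : a = b := e2.injective (ha2.trans (by rw [hval, ← hb2]))
    subst hab
    exact Subtype.ext (mkLex_inj (ha1.symm.trans hb1))
  map_fun' := fun f => isEmptyElim f
  map_rel' := by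
    intro n r v
    rcases Nat.eq_zero_or_pos n with rfl | hn
    · rw [relMap_sub, relMap_sub]
      exact iff_of_eq (congrArg _ (Subsingleton.elim _ _))
    · have hspec := fun k => psiFun_spec e1 e2 i (v k)
      choose a h1 h2 using hspec
      have key : ∀ (e : A ↪[langU L1 O] (Σₗ j, M j)) (y : Fin n → M i),
          (∀ k, e (a k) = toLex ⟨i, y k⟩) →
          (Structure.RelMap (L := L1.sum Language.order) r y ↔
            Structure.RelMap (L := langU L1 O) (Sum.inl r) a) := by
        intro e y hy
        rw [← relMap_fiber_iff' (Nat.pos_iff_ne_zero.mp hn) r y]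
        rw [show (fun k => (toLex ⟨i, y k⟩ : Σₗ j, M j)) = ⇑e ∘ a from
          funext fun k => (hy k).symm]
        exact e.map_rel' (Sum.inl r) a
      rw [relMap_sub, relMap_sub]
      exact (key e2 (fun k => psiFun e1 e2 i (v k)) h2).trans
        (key e1 (fun k => (v k : M i)) h1).symm

end WithA

end SRPaper7

end Statement7Aux

open SRPaper in
/-- If each `age(M_i)` has the hereditary, joint embedding, and amalgamation
properties, then so does the age of `U_{i ∈ O}(M_i)`. -/
theorem statement7 (O : Type) [LinearOrder O]
    (L1 : Language) [L1.IsRelational] (M : O → Type)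
    [∀ i, L1.Structure (M i)] [∀ i, LinearOrder (M i)] [∀ i, Countable (M i)]
    (hHP : ∀ i, Hereditary ((L1.sum Language.order).age (M i)))
    (hJEP : ∀ i, JointEmbedding ((L1.sum Language.order).age (M i)))
    (hAP : ∀ i, Amalgamation ((L1.sum Language.order).age (M i))) :
    Hereditary ((langU L1 O).age (Σₗ i, M i)) ∧
      JointEmbedding ((langU L1 O).age (Σₗ i, M i)) ∧
      Amalgamation ((langU L1 O).age (Σₗ i, M i)) := by
  classical
  refine ⟨age.hereditary _, age.jointEmbedding _, ?_⟩
  intro A N P MN MP hA hN hP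
  obtain ⟨hNfg, ⟨eN⟩⟩ := hN
  obtain ⟨hPfg, ⟨eP⟩⟩ := hP
  haveI : Finite ↥N := hNfg.finite
  haveI : Finite ↥P := hPfg.finite
  haveI : Finite ↥A := hA.1.finite
  let e1 : ↥A ↪[langU L1 O] (Σₗ i, M i) := eN.comp MN
  let e2 : ↥A ↪[langU L1 O] (Σₗ i, M i) := eP.comp MP
  have memAge : ∀ (X : Type) [inst : (langU L1 O).Structure X]
      (e : X ↪[langU L1 O] Σₗ i, M i), Finite X → ∀ i : O,
      (⟨↥(SRPaper7.fibSub e i), inferInstance⟩ : Bundled (L1.sum Language.order).Structure)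
        ∈ (L1.sum Language.order).age (M i) := by
    intro X _ e hfin i
    haveI : Finite X := hfin
    exact ⟨(Substructure.fg_iff_structure_fg _).1
      (Substructure.fg_closure (SRPaper7.fibSet_finite e i)),
      ⟨(SRPaper7.fibSub e i).subtype⟩⟩
  have hsetN : ∀ i, SRPaper7.fibSet e1 i ⊆ SRPaper7.fibSet eN i := by
    rintro i x ⟨a, ha⟩
    exact ⟨MN a, ha⟩
  have hsetP : ∀ i, SRPaper7.fibSet e2 i ⊆ SRPaper7.fibSet eP i := by
    rintro i x ⟨a, ha⟩
    exact ⟨MP a, ha⟩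
  have hsubN : ∀ i, SRPaper7.fibSub e1 i ≤ SRPaper7.fibSub eN i := fun i =>
    Substructure.closure_mono (hsetN i)
  have hsubP : ∀ i, SRPaper7.fibSub e2 i ≤ SRPaper7.fibSub eP i := fun i =>
    Substructure.closure_mono (hsetP i)
  let ψ : ∀ i : O, ↥(SRPaper7.fibSub e1 i) ↪[L1.sum Language.order]
      ↥(SRPaper7.fibSub eP i) := fun i =>
    (Substructure.inclusion (hsubP i)).comp (SRPaper7.psi e1 e2 i)
  have hstep : ∀ i : O, ∃ (Q : Bundled (L1.sum Language.order).Structure)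
      (NQ : ↥(SRPaper7.fibSub eN i) ↪[L1.sum Language.order] ↥Q)
      (PQ : ↥(SRPaper7.fibSub eP i) ↪[L1.sum Language.order] ↥Q),
      Q ∈ (L1.sum Language.order).age (M i) ∧
        NQ.comp (Substructure.inclusion (hsubN i)) = PQ.comp (ψ i) := by
    intro i
    obtain ⟨Q, NQ, PQ, hQ, hcomm⟩ := hAP i ⟨↥(SRPaper7.fibSub e1 i), inferInstance⟩
      ⟨↥(SRPaper7.fibSub eN i), inferInstance⟩ ⟨↥(SRPaper7.fibSub eP i), inferInstance⟩
      (Substructure.inclusion (hsubN i)) (ψ i)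
      (memAge ↥A e1 inferInstance i) (memAge ↥N eN inferInstance i)
      (memAge ↥P eP inferInstance i)
    exact ⟨Q, NQ, PQ, hQ, hcomm⟩
  choose Q NQ PQ hQage hQcomm using hstep
  have qemb : ∀ i, ↥(Q i) ↪[L1.sum Language.order] M i := fun i => (hQage i).2.some
  let gN : ∀ i, ↥(SRPaper7.fibSub eN i) ↪[L1.sum Language.order] M i :=
    fun i => (qemb i).comp (NQ i)
  let gP : ∀ i, ↥(SRPaper7.fibSub eP i) ↪[L1.sum Language.order] M i :=
    fun i => (qemb i).comp (PQ i)
  let FN := SRPaper7.builder eN (SRPaper7.tmap eN gN) (SRPaper7.goodT_tmap eN gN)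
  let FP := SRPaper7.builder eP (SRPaper7.tmap eP gP) (SRPaper7.goodT_tmap eP gP)
  have key : ∀ a : ↥A, FN (MN a) = FP (MP a) := by
    intro a
    obtain ⟨i, x, h1⟩ : ∃ i x, e1 a = toLex ⟨i, x⟩ :=
      ⟨_, _, SRPaper7.compAt_spec _ _ rfl⟩
    obtain ⟨y, h2⟩ : ∃ y, e2 a = toLex ⟨i, y⟩ := by
      have hfib : (ofLex (e2 a)).1 = i := by
        rw [← SRPaper7.fib_eq_fib e1 e2 a, h1]
        exact rfl
      exact ⟨_, SRPaper7.compAt_spec _ _ hfib⟩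
    have hx1 : x ∈ SRPaper7.fibSet e1 i := ⟨a, h1⟩
    have hxN : x ∈ SRPaper7.fibSet eN i := ⟨MN a, h1⟩
    have hyP : y ∈ SRPaper7.fibSet eP i := ⟨MP a, h2⟩
    show SRPaper7.fmapU (SRPaper7.tmap eN gN) (eN (MN a))
      = SRPaper7.fmapU (SRPaper7.tmap eP gP) (eP (MP a))
    rw [show eN (MN a) = toLex ⟨i, x⟩ from h1, show eP (MP a) = toLex ⟨i, y⟩ from h2,
      SRPaper7.fmapU_mk, SRPaper7.fmapU_mk, SRPaper7.tmap_eq gN hxN, SRPaper7.tmap_eq gP hyP]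
    have hz : NQ i (Substructure.inclusion (hsubN i) ⟨x, Substructure.subset_closure hx1⟩)
        = PQ i (ψ i ⟨x, Substructure.subset_closure hx1⟩) :=
      DFunLike.congr_fun (hQcomm i) ⟨x, Substructure.subset_closure hx1⟩
    have hincl : Substructure.inclusion (hsubN i) ⟨x, Substructure.subset_closure hx1⟩
        = (⟨x, Substructure.subset_closure hxN⟩ : ↥(SRPaper7.fibSub eN i)) :=
      Subtype.ext rfl
    have hpsi : ψ i ⟨x, Substructure.subset_closure hx1⟩
        = (⟨y, Substructure.subset_closure hyP⟩ : ↥(SRPaper7.fibSub eP i)) :=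
      Subtype.ext (SRPaper7.psiFun_eq e1 e2 i h1 h2)
    rw [hincl, hpsi] at hz
    have hval : gN i ⟨x, Substructure.subset_closure hxN⟩
        = gP i ⟨y, Substructure.subset_closure hyP⟩ := by
      show qemb i (NQ i ⟨x, Substructure.subset_closure hxN⟩)
        = qemb i (PQ i ⟨y, Substructure.subset_closure hyP⟩)
      rw [hz]
    rw [hval]
  have hQfin : (Set.range ⇑FN ∪ Set.range ⇑FP).Finite :=
    (Set.finite_range _).union (Set.finite_range _)
  refine ⟨⟨↥(Substructure.closure (langU L1 O) (Set.range ⇑FN ∪ Set.range ⇑FP)), inferInstance⟩,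
    FN.codRestrict _ (fun b => Substructure.subset_closure (Set.mem_union_left _ ⟨b, rfl⟩)),
    FP.codRestrict _ (fun b => Substructure.subset_closure (Set.mem_union_right _ ⟨b, rfl⟩)),
    ⟨(Substructure.fg_iff_structure_fg _).1 (Substructure.fg_closure hQfin),
      ⟨Substructure.subtype _⟩⟩, ?_⟩
  apply Embedding.ext
  intro a
  exact Subtype.ext (key a)
end

section
/- Let O be a linear order and for each i in O let M_i be a countable relational structure linearly ordered by <. If each M_i has the Ramsey property, then U_{i in O}(M_i) has the Ramsey property. -/
open FirstOrder FirstOrder.Language FirstOrder.Language.Structure CategoryTheory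

namespace SRPaper

/-! ### Disjoint unions and semi-direct product structures

An "ordered `L`-structure" is modelled as a type with an `L.Structure` instance (for the
relations other than `<`) together with a `LinearOrder` instance (interpreting `<`); its full
language is `L.sum Language.order`. -/

attribute [local instance] FirstOrder.Language.orderStructure

end SRPaper

/-!
Two substructures of `U_{i ∈ O}(M_i)` are isomorphic exactly when their parts in each fibre
`M_i` are isomorphic, because every relation of `U` is either computed inside one fibre or
determined by the fibres alone. A Ramsey witness for finite `A`, `B` is then built by induction
on the finitely many fibres met by `A`. To add a fibre `t`, take a witness `C_t` in `M_t` for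
the `t`-parts of `A` and `B`, and, by induction, a witness `C'` for the remaining parts with
respect to colourings whose colours are colourings of the substructures of `C_t`. A copy `s`
of `A` is given the colour `u ↦ col (s' ∪ u)` where `s'` is its part outside `t`; the
homogeneous copy in `C'` fixes this colouring, and a homogeneous copy in `C_t` for it finishes
the argument, so `C' ∪ C_t` is a witness.
-/

namespace SRPaper

attribute [local instance] FirstOrder.Language.orderStructure

instance langP.isRelational (O : Type) : (langP O).IsRelational :=
  fun _ => inferInstanceAs (IsEmpty Empty)

instance langU.isRelational (L1 : Language) [L1.IsRelational] (O : Type) :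
    (langU L1 O).IsRelational :=
  inferInstanceAs ((L1.sum Language.order).sum (langP O)).IsRelational

section Relational

variable {L : Language} [L.IsRelational] {W : Type*} [L.Structure W]

def ofSet (s : Set W) : L.Substructure W := ⟨s, fun f => isEmptyElim f⟩

lemma coe_sup_of_isRelational (s t : L.Substructure W) :
    ((s ⊔ t : L.Substructure W) : Set W) = (s : Set W) ∪ t := by
  have := Substructure.closure_eq_of_isRelational L ((s : Set W) ∪ t)
  rwa [Substructure.closure_union, Substructure.closure_eq, Substructure.closure_eq] at this

@[simp] lemma mem_sup_of_isRelational {s t : L.Substructure W} {x : W} :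
    x ∈ s ⊔ t ↔ x ∈ s ∨ x ∈ t := by
  rw [← SetLike.mem_coe, coe_sup_of_isRelational, Set.mem_union, SetLike.mem_coe,
    SetLike.mem_coe]

@[simp] lemma coe_bot_of_isRelational : ((⊥ : L.Substructure W) : Set W) = ∅ := by
  rw [← Substructure.closure_empty, Substructure.closure_eq_of_isRelational]

@[simp] lemma notMem_bot_of_isRelational (x : W) : x ∉ (⊥ : L.Substructure W) := by
  rw [← SetLike.mem_coe, coe_bot_of_isRelational]; exact id

lemma eq_bot_iff_isEmpty_of_isRelational (s : L.Substructure W) : s = ⊥ ↔ IsEmpty s := by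
  rw [← SetLike.coe_set_eq, coe_bot_of_isRelational, ← Set.isEmpty_coe_sort]; rfl

lemma eq_bot_of_equiv {W' : Type*} [L.Structure W'] {s : L.Substructure W}
    {t : L.Substructure W'} (e : s ≃[L] t) (ht : t = ⊥) : s = ⊥ := by
  rw [eq_bot_iff_isEmpty_of_isRelational] at ht ⊢
  exact e.toEquiv.isEmpty_congr.2 ht

def equivOfMapRel {X Y : Type*} [L.Structure X] [L.Structure Y] (e : X ≃ Y)
    (h : ∀ {n} (r : L.Relations n) (v : Fin n → X), RelMap r v → RelMap r (e ∘ v))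
    (h' : ∀ {n} (r : L.Relations n) (v : Fin n → Y), RelMap r v → RelMap r (e.symm ∘ v)) :
    X ≃[L] Y where
  toEquiv := e
  map_fun' := fun f => isEmptyElim f
  map_rel' := fun r v => ⟨fun hv => by simpa [Function.comp_def] using h' r _ hv, h r v⟩

end Relational

lemma Substructure.finite_Iic {L : Language} {W : Type*} [L.Structure W] {c : L.Substructure W}
    (hc : (c : Set W).Finite) : (Set.Iic c).Finite :=
  (hc.powerset.preimage SetLike.coe_injective.injOn).subset fun _ hu => SetLike.coe_subset_coe.2 hu

lemma Hom.map_comap_eq_of_le_range {L : Language} {X Y : Type*} [L.Structure X] [L.Structure Y]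
    (f : X →[L] Y) {s : L.Substructure Y} (hs : s ≤ f.range) : (s.comap f).map f = s := by
  refine le_antisymm Substructure.map_comap_le fun y hy => ?_
  obtain ⟨x, rfl⟩ := Hom.mem_range.1 (hs hy)
  exact ⟨x, hy, rfl⟩

section RamseyWitness

variable {L : Language} {W : Type*} [L.Structure W]

def IsRamseyWitness (a b c : L.Substructure W) (κ : Type*) : Prop :=
  ∀ col : L.Substructure W → κ, ∃ b' ≤ c, Nonempty (b ≃[L] b') ∧
    ∀ s₁ ≤ b', ∀ s₂ ≤ b', Nonempty (a ≃[L] s₁) → Nonempty (a ≃[L] s₂) →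
      col s₁ = col s₂

variable {a b c : L.Substructure W}

lemma IsRamseyWitness.of_injective {κ κ' : Type*} {f : κ → κ'} (hf : f.Injective)
    (h : IsRamseyWitness a b c κ') : IsRamseyWitness a b c κ := fun col =>
  (h (f ∘ col)).imp fun _ ⟨hb', he, hconst⟩ =>
    ⟨hb', he, fun s₁ h₁ s₂ h₂ e₁ e₂ => hf (hconst s₁ h₁ s₂ h₂ e₁ e₂)⟩

lemma isRamseyWitness_self_of_eq_bot [L.IsRelational] (ha : a = ⊥) (κ : Type*) :
    IsRamseyWitness a b b κ := by
  refine fun col => ⟨b, le_rfl, ⟨.refl L b⟩, fun s₁ _ s₂ _ ⟨e₁⟩ ⟨e₂⟩ => ?_⟩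
  rw [eq_bot_of_equiv e₁.symm ha, eq_bot_of_equiv e₂.symm ha]

variable [L.IsRelational]

theorem RamseyClass.exists_isRamseyWitness (h : RamseyClass L (L.age W))
    (ha : (a : Set W).Finite) (hb : (b : Set W).Finite) (κ : Type*) [Finite κ] :
    ∃ c : L.Substructure W, (c : Set W).Finite ∧ IsRamseyWitness a b c κ := by
  have : Finite a := ha.to_subtype
  have : Finite b := hb.to_subtype
  obtain ⟨C, ⟨hC, ⟨e⟩⟩, hRam⟩ := h (Bundled.of a) (Bundled.of b)
    ⟨Structure.FG.of_finite (M := a), ⟨a.subtype⟩⟩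
    ⟨Structure.FG.of_finite (M := b), ⟨b.subtype⟩⟩
    (Nat.card κ + 1) le_add_self
  have : Finite C := hC.finite
  refine ⟨e.toHom.range, Set.finite_range e,
    .of_injective ((Fin.castSucc_injective _).comp (Finite.equivFin κ).injective) fun col => ?_⟩
  obtain ⟨B', ⟨eB⟩, hconst⟩ := hRam fun s => col (s.map e.toHom)
  refine ⟨B'.map e.toHom, Hom.map_le_range, ⟨(e.substructureEquivMap B').comp eB⟩, ?_⟩
  have pullback : ∀ s ≤ B'.map e.toHom, Nonempty (a ≃[L] s) →
      s.comap e.toHom ≤ B' ∧ Nonempty (a ≃[L] s.comap e.toHom) ∧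
        (s.comap e.toHom).map e.toHom = s := by
    intro s hs ⟨es⟩
    have hmap := Hom.map_comap_eq_of_le_range e.toHom (hs.trans Hom.map_le_range)
    refine ⟨fun x hx => ?_, ⟨?_⟩, hmap⟩
    · obtain ⟨y, hy, hxy⟩ := hs hx
      rwa [← e.injective hxy]
    · exact (e.substructureEquivMap _).symm.comp (by rw [hmap]; exact es)
  intro s₁ hs₁ s₂ hs₂ h₁ h₂
  obtain ⟨hle₁, he₁, hmap₁⟩ := pullback s₁ hs₁ h₁
  obtain ⟨hle₂, he₂, hmap₂⟩ := pullback s₂ hs₂ h₂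
  rw [← hmap₁, ← hmap₂]
  exact hconst _ _ hle₁ hle₂ he₁ he₂

theorem ramseyClass_age_of_isRamseyWitness
    (h : ∀ a b : L.Substructure W, (a : Set W).Finite → (b : Set W).Finite → ∀ k : ℕ,
      ∃ c : L.Substructure W, (c : Set W).Finite ∧ IsRamseyWitness a b c (Fin k)) :
    RamseyClass L (L.age W) := by
  rintro A B ⟨hA, ⟨f⟩⟩ ⟨hB, ⟨g⟩⟩ k -
  have : Finite A := hA.finite
  have : Finite B := hB.finite
  obtain ⟨c, hc, hRam⟩ := h f.toHom.range g.toHom.range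
    (Set.finite_range f) (Set.finite_range g) k
  have : Finite c := hc.to_subtype
  refine ⟨Bundled.of c, ⟨Structure.FG.of_finite (M := c), ⟨c.subtype⟩⟩, ?_⟩
  intro col
  obtain ⟨b', hb'c, ⟨eb⟩, hconst⟩ := hRam fun s => col (s.comap c.subtype.toHom)
  have hrange : b' ≤ c.subtype.toHom.range := by rwa [Substructure.range_subtype]
  have hmap := Hom.map_comap_eq_of_le_range _ hrange
  refine ⟨b'.comap c.subtype.toHom, ⟨(c.subtype.substructureEquivMap _).symm.comp ?_⟩, ?_⟩
  · change B ≃[L] ((b'.comap c.subtype.toHom).map c.subtype.toHom : L.Substructure W)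
    rw [hmap]; exact eb.comp g.equivRange
  have push : ∀ A' : L.Substructure c, A' ≤ b'.comap c.subtype.toHom → (A ≃[L] A') →
      A'.map c.subtype.toHom ≤ b' ∧ Nonempty (f.toHom.range ≃[L] A'.map c.subtype.toHom) :=
    fun A' hA' e' => ⟨(Substructure.monotone_map hA').trans Substructure.map_comap_le,
      ⟨(c.subtype.substructureEquivMap A').comp (e'.comp f.equivRange.symm)⟩⟩
  intro A₁ A₂ h₁ h₂ ⟨e₁⟩ ⟨e₂⟩
  obtain ⟨hle₁, he₁⟩ := push A₁ h₁ e₁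
  obtain ⟨hle₂, he₂⟩ := push A₂ h₂ e₂
  have hcomap := Substructure.comap_map_eq_of_injective (f := c.subtype.toHom) c.subtype.injective
  rw [← hcomap A₁, ← hcomap A₂]
  exact hconst _ hle₁ _ hle₂ he₁ he₂

end RamseyWitness

section DisjointUnion

variable {O : Type} {M : O → Type}

def fib (x : Σₗ i, M i) : O := (ofLex x).1

def incl (i : O) (x : M i) : Σₗ j, M j := toLex ⟨i, x⟩

@[simp] lemma fib_incl (i : O) (x : M i) : fib (incl i x) = i := rfl

lemma incl_injective (i : O) : Function.Injective (incl (M := M) i) :=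
  fun _ _ h => sigma_mk_injective h

variable [LinearOrder O] {L1 : Language} [L1.IsRelational] [∀ i, L1.Structure (M i)]
  [∀ i, LinearOrder (M i)]

lemma incl_le_incl_iff {i : O} {x y : M i} : incl i x ≤ incl i y ↔ x ≤ y := by
  rw [incl, incl, Sigma.Lex.le_def]
  refine ⟨?_, fun h => Or.inr ⟨rfl, h⟩⟩
  rintro (h | ⟨_, h⟩)
  exacts [absurd h (lt_irrefl i), h]

lemma incl_le_incl_iff_of_ne {i j : O} (h : i ≠ j) {x : M i} {y : M j} :
    incl i x ≤ incl j y ↔ i < j := by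
  rw [incl, incl, Sigma.Lex.le_def]
  refine ⟨?_, Or.inl⟩
  rintro (h' | ⟨h', -⟩)
  exacts [h', absurd h' h]

/-- On a single fibre, `incl i` preserves and reflects the relations of positive arity; a
nullary relation of `L1` holds in the union as soon as it holds in some fibre. -/
lemma relMap_incl_iff {n : ℕ} (hn : n ≠ 0) (R : (L1.sum Language.order).Relations n) {i : O}
    (v : Fin n → M i) :
    RelMap (L := langU L1 O) (Sum.inl R) (incl i ∘ v) ↔ RelMap R v := by
  rcases R with r | R
  · refine ⟨fun ⟨j, w, hw, hr⟩ => ?_, fun h => ⟨i, v, fun _ => rfl, h⟩⟩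
    obtain rfl : i = j := congrArg fib (hw ⟨0, Nat.pos_of_ne_zero hn⟩)
    rwa [show v = w from funext fun k => incl_injective (M := M) i (hw k)]
  · cases (R : Language.orderRel n)
    exact incl_le_incl_iff

variable (s t : (langU L1 O).Substructure (Σₗ i, M i))

def part (i : O) : (L1.sum Language.order).Substructure (M i) := ofSet (incl i ⁻¹' s)

def restr (T : Set O) : (langU L1 O).Substructure (Σₗ i, M i) :=
  ofSet {x | x ∈ s ∧ fib x ∈ T}

def single (i : O) (u : (L1.sum Language.order).Substructure (M i)) :
    (langU L1 O).Substructure (Σₗ i, M i) :=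
  ofSet (incl i '' u)

variable {s t}

@[simp] lemma mem_part {i : O} {x : M i} : x ∈ part s i ↔ incl i x ∈ s := Iff.rfl

@[simp] lemma mem_restr {T : Set O} {x : Σₗ i, M i} :
    x ∈ restr s T ↔ x ∈ s ∧ fib x ∈ T := Iff.rfl

@[simp] lemma mem_single {i : O} {u : (L1.sum Language.order).Substructure (M i)}
    {x : Σₗ i, M i} : x ∈ single i u ↔ ∃ y ∈ u, incl i y = x := Iff.rfl

lemma exists_incl_eq (x : s) : ∃ (i : O) (y : part s i), (⟨incl i y, y.2⟩ : s) = x :=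
  ⟨fib x.1, ⟨(ofLex x.1).2, x.2⟩, rfl⟩

lemma le_iff_forall_part_le : s ≤ t ↔ ∀ i, part s i ≤ part t i :=
  ⟨fun h _ _ hx => h hx, fun h x hx => h (fib x) (x := (ofLex x).2) hx⟩

lemma ext_part (h : ∀ i, part s i = part t i) : s = t :=
  le_antisymm (le_iff_forall_part_le.2 fun i => (h i).le)
    (le_iff_forall_part_le.2 fun i => (h i).ge)

lemma part_sup (i : O) : part (s ⊔ t) i = part s i ⊔ part t i := by
  ext; simp

lemma part_restr_of_mem {T : Set O} {i : O} (h : i ∈ T) : part (restr s T) i = part s i := by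
  ext; simp [h]

lemma part_restr_of_notMem {T : Set O} {i : O} (h : i ∉ T) : part (restr s T) i = ⊥ := by
  ext; simp [h]

lemma part_single_self {i : O} (u : (L1.sum Language.order).Substructure (M i)) :
    part (single i u) i = u := by
  ext; simp [(incl_injective i).eq_iff]

lemma part_single_of_ne {i j : O} (h : j ≠ i) (u : (L1.sum Language.order).Substructure (M i)) :
    part (single i u) j = ⊥ := by
  ext x
  simp only [mem_part, mem_single, notMem_bot_of_isRelational, iff_false, not_exists, not_and]
  exact fun y _ hy => h (congrArg fib hy).symm

lemma restr_compl_sup_single_part (i : O) : restr s {i}ᶜ ⊔ single i (part s i) = s := by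
  refine ext_part fun j => ?_
  rcases eq_or_ne j i with rfl | h
  · rw [part_sup, part_restr_of_notMem (by simp), part_single_self, bot_sup_eq]
  · rw [part_sup, part_restr_of_mem h, part_single_of_ne h, sup_bot_eq]

lemma restr_compl_le_of_le_sup_single {i : O} {u : (L1.sum Language.order).Substructure (M i)}
    (h : s ≤ t ⊔ single i u) : restr s {i}ᶜ ≤ t := by
  refine le_iff_forall_part_le.2 fun j => ?_
  rcases eq_or_ne j i with rfl | hj
  · simp [part_restr_of_notMem]
  · rw [part_restr_of_mem hj]
    simpa [part_sup, part_single_of_ne hj] using le_iff_forall_part_le.1 h j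

lemma part_le_of_le_sup_single {i : O} {u : (L1.sum Language.order).Substructure (M i)}
    (h : s ≤ t ⊔ single i u) (ht : part t i = ⊥) : part s i ≤ u := by
  simpa [part_sup, ht, part_single_self] using le_iff_forall_part_le.1 h i

lemma single_mono {i : O} {u v : (L1.sum Language.order).Substructure (M i)} (h : u ≤ v) :
    single i u ≤ single i v := by
  rintro _ ⟨y, hy, rfl⟩
  exact ⟨y, h hy, rfl⟩

lemma fib_image_restr_subset (T : Set O) : fib '' (restr s T : Set (Σₗ i, M i)) ⊆ T := by
  rintro _ ⟨x, hx, rfl⟩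
  exact hx.2

lemma fib_image_restr_subset_image (T : Set O) :
    fib '' (restr s T : Set (Σₗ i, M i)) ⊆ fib '' (s : Set (Σₗ i, M i)) :=
  Set.image_mono fun _ hx => hx.1

lemma finite_part (hs : (s : Set (Σₗ i, M i)).Finite) (i : O) : (part s i : Set (M i)).Finite :=
  hs.preimage (f := incl i) (incl_injective i).injOn

lemma finite_restr (hs : (s : Set (Σₗ i, M i)).Finite) (T : Set O) :
    (restr s T : Set (Σₗ i, M i)).Finite :=
  hs.subset fun _ hx => hx.1

lemma finite_sup_single (hs : (s : Set (Σₗ i, M i)).Finite) {i : O}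
    {u : (L1.sum Language.order).Substructure (M i)} (hu : (u : Set (M i)).Finite) :
    ((s ⊔ single i u : (langU L1 O).Substructure _) : Set (Σₗ i, M i)).Finite := by
  rw [coe_sup_of_isRelational]
  exact hs.union (hu.image _)

end DisjointUnion

section Isomorphisms

variable {O : Type} [LinearOrder O] {L1 : Language} [L1.IsRelational] {M : O → Type}
  [∀ i, L1.Structure (M i)] [∀ i, LinearOrder (M i)]
  {s t : (langU L1 O).Substructure (Σₗ i, M i)}

lemma fib_equiv (e : s ≃[langU L1 O] t) (x : s) : fib (e x).1 = fib x.1 :=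
  (e.map_rel (Sum.inr (PredSymb.P (fib x.1))) fun _ => x).2 rfl

lemma exists_incl_eq_of_fib_eq {i : O} {x : Σₗ i, M i} (hx : x ∈ s) (h : fib x = i) :
    ∃ y : part s i, incl i y = x := by
  subst h
  exact ⟨⟨(ofLex x).2, hx⟩, rfl⟩

noncomputable def partMap (e : s ≃[langU L1 O] t) (i : O) (y : part s i) : part t i :=
  (exists_incl_eq_of_fib_eq (e ⟨incl i y, y.2⟩).2 (fib_equiv e _)).choose

lemma incl_partMap (e : s ≃[langU L1 O] t) {i : O} (y : part s i) :
    incl i (partMap e i y : M i) = e ⟨incl i y, y.2⟩ :=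
  (exists_incl_eq_of_fib_eq (e ⟨incl i y, y.2⟩).2 (fib_equiv e _)).choose_spec

lemma partMap_symm_partMap (e : s ≃[langU L1 O] t) {i : O} (y : part s i) :
    partMap e.symm i (partMap e i y) = y := by
  refine Subtype.ext (incl_injective i ?_)
  rw [incl_partMap, show (⟨_, (partMap e i y).2⟩ : t) = e ⟨incl i y, y.2⟩ from
    Subtype.ext (incl_partMap e y), Language.Equiv.symm_apply_apply]

lemma relMap_partMap (e : s ≃[langU L1 O] t) {i : O} {n : ℕ}
    (R : (L1.sum Language.order).Relations n) (v : Fin n → part s i) (h : RelMap R v) :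
    RelMap R (partMap e i ∘ v) := by
  rcases eq_or_ne n 0 with rfl | hn
  · exact (congrArg (RelMap R) (Subsingleton.elim (α := Fin 0 → M i) _ _)).mp h
  · have h' := (e.map_rel (Sum.inl R) fun k => ⟨incl i (v k), (v k).2⟩).2
      ((relMap_incl_iff hn R _).2 h)
    refine (relMap_incl_iff hn R _).1 ?_
    change RelMap (L := langU L1 O) (Sum.inl R) fun k => (e ⟨incl i (v k), (v k).2⟩).1 at h'
    simpa only [Function.comp_def, incl_partMap] using h'

noncomputable def partEquiv (e : s ≃[langU L1 O] t) (i : O) :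
    part s i ≃[L1.sum Language.order] part t i :=
  equivOfMapRel ⟨partMap e i, partMap e.symm i, partMap_symm_partMap e,
      fun y => by simpa using partMap_symm_partMap e.symm y⟩
    (relMap_partMap e) (relMap_partMap e.symm)

variable (g : ∀ i, part s i ≃[L1.sum Language.order] part t i)

def glueMap (x : s) : t :=
  ⟨incl (fib x.1) (g (fib x.1) ⟨(ofLex x.1).2, x.2⟩), (g (fib x.1) _).2⟩

lemma glueMap_incl {i : O} (y : part s i) :
    (glueMap g ⟨incl i y, y.2⟩ : Σₗ i, M i) = incl i (g i y) := rfl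

lemma fib_glueMap (x : s) : fib (glueMap g x : Σₗ i, M i) = fib x.1 := rfl

lemma glueMap_symm_glueMap (x : s) : glueMap (fun i => (g i).symm) (glueMap g x) = x := by
  obtain ⟨i, y, rfl⟩ := exists_incl_eq x
  exact Subtype.ext (congrArg (incl i ·) (congrArg Subtype.val ((g i).symm_apply_apply y)))

lemma relMap_glueMap {n : ℕ} (R : (langU L1 O).Relations n) (v : Fin n → s) (h : RelMap R v) :
    RelMap R (glueMap g ∘ v) := by
  rcases R with (r | R) | R
  · obtain ⟨j, w, hw, hr⟩ := h
    replace hw : ∀ k, (v k : Σₗ i, M i) = incl j (w k) := hw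
    let u : Fin n → part s j := fun k => ⟨w k, by rw [mem_part, ← hw k]; exact (v k).2⟩
    have hvu : ∀ k, v k = ⟨incl j (u k), (u k).2⟩ := fun k => Subtype.ext (hw k)
    refine ⟨j, fun k => g j (u k), fun k => by
      show (glueMap g (v k) : Σₗ i, M i) = incl j (g j (u k))
      rw [hvu, glueMap_incl],
      ((g j).map_rel (Sum.inl r) u).2 hr⟩
  · change Language.orderRel n at R
    cases R
    change (v 0 : Σₗ i, M i) ≤ v 1 at h
    change (glueMap g (v 0) : Σₗ i, M i) ≤ glueMap g (v 1)
    obtain ⟨i, a, ha⟩ := exists_incl_eq (v 0)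
    obtain ⟨j, b, hb⟩ := exists_incl_eq (v 1)
    rw [← ha, ← hb] at h ⊢
    rw [glueMap_incl, glueMap_incl]
    rcases eq_or_ne i j with rfl | hij
    · exact incl_le_incl_iff.2 (((g i).map_rel (Sum.inr .le) ![a, b]).2 (incl_le_incl_iff.1 h))
    · exact (incl_le_incl_iff_of_ne hij).2 ((incl_le_incl_iff_of_ne hij).1 h)
  · change PredSymb O n at R
    cases R
    exact (fib_glueMap g (v 0)).trans h

def glueEquiv : s ≃[langU L1 O] t :=
  equivOfMapRel ⟨glueMap g, glueMap fun i => (g i).symm, glueMap_symm_glueMap g,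
      fun y => by simpa using glueMap_symm_glueMap (fun i => (g i).symm) y⟩
    (relMap_glueMap g) (relMap_glueMap _)

theorem nonempty_equiv_iff_forall_part :
    Nonempty (s ≃[langU L1 O] t) ↔
      ∀ i, Nonempty (part s i ≃[L1.sum Language.order] part t i) :=
  ⟨fun ⟨e⟩ i => ⟨partEquiv e i⟩, fun h => ⟨glueEquiv fun i => (h i).some⟩⟩

end Isomorphisms

section Ramsey

variable {O : Type} [LinearOrder O] {L1 : Language} [L1.IsRelational] {M : O → Type}
  [∀ i, L1.Structure (M i)] [∀ i, LinearOrder (M i)]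
  {s t : (langU L1 O).Substructure (Σₗ i, M i)}

lemma nonempty_equiv_restr (h : Nonempty (s ≃[langU L1 O] t)) (T : Set O) :
    Nonempty (restr s T ≃[langU L1 O] restr t T) := by
  refine nonempty_equiv_iff_forall_part.2 fun i => ?_
  by_cases hi : i ∈ T
  · rw [part_restr_of_mem hi, part_restr_of_mem hi]
    exact nonempty_equiv_iff_forall_part.1 h i
  · rw [part_restr_of_notMem hi, part_restr_of_notMem hi]
    exact ⟨.refl _ _⟩

variable {a b c : (langU L1 O).Substructure (Σₗ i, M i)} {κ : Type*}

theorem IsRamseyWitness.sup_single {t : O} {ct : (L1.sum Language.order).Substructure (M t)}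
    (hc : IsRamseyWitness (restr a {t}ᶜ) (restr b {t}ᶜ) c (Set.Iic ct → κ))
    (hct : IsRamseyWitness (part a t) (part b t) ct κ) :
    IsRamseyWitness a b (c ⊔ single t ct) κ := by
  intro col
  obtain ⟨b₀, hb₀c, ⟨e₀⟩, hconst₀⟩ := hc fun x u => col (x ⊔ single t u)
  have hb₀t : part b₀ t = ⊥ :=
    eq_bot_of_equiv (partEquiv e₀.symm t) (part_restr_of_notMem (by simp))
  -- any copy `x₀` of `restr a {t}ᶜ` in `b₀` will do: all such copies induce the same colouring
  obtain ⟨x₀, hx₀⟩ : ∃ x₀, (∃ x ≤ b₀, Nonempty (restr a {t}ᶜ ≃[langU L1 O] x)) →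
      x₀ ≤ b₀ ∧ Nonempty (restr a {t}ᶜ ≃[langU L1 O] x₀) := by
    by_cases h : ∃ x ≤ b₀, Nonempty (restr a {t}ᶜ ≃[langU L1 O] x)
    exacts [⟨h.choose, fun _ => h.choose_spec⟩, ⟨⊥, fun h' => absurd h' h⟩]
  obtain ⟨bt, hbt, ⟨et⟩, hconstt⟩ := hct fun u => col (x₀ ⊔ single t u)
  refine ⟨b₀ ⊔ single t bt, sup_le_sup hb₀c (single_mono hbt), ?_, ?_⟩
  · refine nonempty_equiv_iff_forall_part.2 fun i => ?_
    rcases eq_or_ne i t with rfl | hi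
    · rw [part_sup, hb₀t, part_single_self, bot_sup_eq]
      exact ⟨et⟩
    · rw [part_sup, part_single_of_ne hi, sup_bot_eq, ← part_restr_of_mem (T := {t}ᶜ) hi]
      exact nonempty_equiv_iff_forall_part.1 ⟨e₀⟩ i
  have reduce : ∀ s ≤ b₀ ⊔ single t bt, Nonempty (a ≃[langU L1 O] s) →
      part s t ≤ bt ∧ Nonempty (part a t ≃[L1.sum Language.order] part s t) ∧
        col s = col (x₀ ⊔ single t (part s t)) := by
    intro s hs hse
    have hst : part s t ≤ bt := part_le_of_le_sup_single hs hb₀t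
    refine ⟨hst, nonempty_equiv_iff_forall_part.1 hse t, ?_⟩
    have hrestr := restr_compl_le_of_le_sup_single hs
    have hx₀' := hx₀ ⟨_, hrestr, nonempty_equiv_restr hse _⟩
    have := congrFun (hconst₀ _ hrestr _ hx₀'.1 (nonempty_equiv_restr hse _) hx₀'.2)
      ⟨part s t, hst.trans hbt⟩
    rwa [restr_compl_sup_single_part] at this
  intro s₁ hs₁ s₂ hs₂ h₁ h₂
  obtain ⟨hle₁, he₁, hcol₁⟩ := reduce s₁ hs₁ h₁
  obtain ⟨hle₂, he₂, hcol₂⟩ := reduce s₂ hs₂ h₂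
  rw [hcol₁, hcol₂]
  exact hconstt _ hle₁ _ hle₂ he₁ he₂

theorem exists_isRamseyWitness
    (hRP : ∀ i, RamseyClass (L1.sum Language.order) ((L1.sum Language.order).age (M i)))
    (S : Finset O) (ha : (a : Set (Σₗ i, M i)).Finite) (hb : (b : Set (Σₗ i, M i)).Finite)
    (haS : fib '' (a : Set (Σₗ i, M i)) ⊆ S) (κ : Type) [Finite κ] :
    ∃ c : (langU L1 O).Substructure (Σₗ i, M i), (c : Set (Σₗ i, M i)).Finite ∧
      IsRamseyWitness a b c κ := by
  induction S using Finset.induction_on generalizing a b κ with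
  | empty =>
    refine ⟨b, hb, isRamseyWitness_self_of_eq_bot ?_ κ⟩
    exact (eq_bot_iff_isEmpty_of_isRelational a).2
      ⟨fun x => by simpa using haS ⟨x.1, x.2, rfl⟩⟩
  | insert t S _ ih =>
    obtain ⟨ct, hct, hRam⟩ :=
      (hRP t).exists_isRamseyWitness (finite_part ha t) (finite_part hb t) κ
    have : Finite (Set.Iic ct) := (Substructure.finite_Iic hct).to_subtype
    have haS' : fib '' (restr a {t}ᶜ : Set (Σₗ i, M i)) ⊆ S := fun i hi => by
      have := haS (fib_image_restr_subset_image _ hi)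
      simp only [Finset.coe_insert, Set.mem_insert_iff] at this
      exact this.resolve_left (fib_image_restr_subset _ hi)
    obtain ⟨c, hc, hcRam⟩ := ih (finite_restr ha _) (finite_restr hb _) haS' (Set.Iic ct → κ)
    exact ⟨_, finite_sup_single hc hct, hcRam.sup_single hRam⟩

end Ramsey

end SRPaper

attribute [local instance] FirstOrder.Language.orderStructure

open SRPaper in
theorem statement9_general (O : Type) [LinearOrder O]
    (L1 : Language) [L1.IsRelational] (M : O → Type)
    [∀ i, L1.Structure (M i)] [∀ i, LinearOrder (M i)]
    (hRP : ∀ i, RamseyClass (L1.sum Language.order) ((L1.sum Language.order).age (M i))) :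
    RamseyClass (langU L1 O) ((langU L1 O).age (Σₗ i, M i)) :=
  ramseyClass_age_of_isRamseyWitness fun _ _ ha hb k =>
    exists_isRamseyWitness hRP (ha.image fib).toFinset ha hb (by simp) (Fin k)

open SRPaper in
/-- If each `M_i` has the Ramsey property, then `U_{i ∈ O}(M_i)` has the
Ramsey property. -/
theorem statement9 (O : Type) [LinearOrder O]
    (L1 : Language) [L1.IsRelational] (M : O → Type)
    [∀ i, L1.Structure (M i)] [∀ i, LinearOrder (M i)] [∀ i, Countable (M i)]
    (hRP : ∀ i, RamseyClass (L1.sum Language.order) ((L1.sum Language.order).age (M i))) :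
    RamseyClass (langU L1 O) ((langU L1 O).age (Σₗ i, M i)) :=
  statement9_general O L1 M hRP
end
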